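/- Let f be a harmonic multilinear polynomial in x₁,…,xₙ with (unique) expansion f = ∑_{B ∈ B_n} f̂(B) χ_B over the top sets B of [n], and let m ∈ [n]. Then the average of f^π over all permutations π of [m] (where f^π denotes f with its variables permuted by π) equals ∑_{B ∈ B_n, B ∩ [m] = ∅} f̂(B) χ_B. In particular, f is invariant under all permutations of the first m coordinates if and only if f̂(B) = 0 for every top set B intersecting [m]. -/

import Mathlib

open MvPolynomial

/-- A multilinear polynomial: every monomial is squarefree. -/
def IsMultilinear {n : ℕ} (P : MvPolynomial (Fin n) ℝ) : Prop :=
  ∀ m ∈ P.support, ∀ i, m i ≤ 1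

/-- A harmonic polynomial: the sum of all partial derivatives vanishes. -/
def IsHarmonic {n : ℕ} (P : MvPolynomial (Fin n) ℝ) : Prop :=
  ∑ i, MvPolynomial.pderiv i P = 0

/-- `B : Fin d → Fin n` is a top set if it is strictly increasing and there is a
sequence `A` of `d` distinct elements, disjoint from `B`, with `A i < B i` for all `i`. -/
def IsTopSet {n d : ℕ} (B : Fin d → Fin n) : Prop :=
  StrictMono B ∧ ∃ A : Fin d → Fin n,
    Function.Injective A ∧ (∀ i j, A i ≠ B j) ∧ ∀ i, A i < B i

/-- `χ_{A,B} = ∏ i (x_{a_i} - x_{b_i})`. -/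
noncomputable def chiAB {n d : ℕ} (A B : Fin d → Fin n) : MvPolynomial (Fin n) ℝ :=
  ∏ i, (X (A i) - X (B i))

open Classical in
/-- `χ_B = ∑_{A < B, A disjoint from B} χ_{A,B}`. -/
noncomputable def chiB {n d : ℕ} (B : Fin d → Fin n) : MvPolynomial (Fin n) ℝ :=
  ∑ A ∈ Finset.univ.filter (fun A : Fin d → Fin n =>
      Function.Injective A ∧ (∀ i j, A i ≠ B j) ∧ ∀ i, A i < B i),
    chiAB A B

/-!
A permutation of `[m]` fixes every `χ_B` with `B` disjoint from `[m]`, since it fixes `B` and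
permutes the sequences `A < B`. If instead `b_k ∈ [m]`, then `a_k < b_k` lies in `[m]` too, and
the transposition `(a_k b_k)` changes the sign of `χ_{A,B}`; pairing `π` with `π (a_k b_k)` shows
that the average of every `χ_{A,B}` vanishes. The invariance criterion then comes from the
uniqueness of the expansion: `χ_B` is homogeneous of degree `|B|`, and the `χ_B` with `|B| = d`
are linearly independent.
-/

open Equiv Finset

def permsBelow (n m : ℕ) : Finset (Perm (Fin n)) :=
  univ.filter fun π => ∀ i : Fin n, m ≤ (i : ℕ) → π i = i

section permsBelow

variable {n m : ℕ} {π : Perm (Fin n)}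

@[simp]
lemma mem_permsBelow : π ∈ permsBelow n m ↔ ∀ i : Fin n, m ≤ (i : ℕ) → π i = i := by
  simp [permsBelow]

lemma card_permsBelow (hmn : m ≤ n) : #(permsBelow n m) = m.factorial := by
  classical
  have hfix : ∀ σ : Perm (Fin n),
      (∀ i : Fin n, m ≤ (i : ℕ) → σ i = i) ↔ ∀ i : Fin n, ¬ (i : ℕ) < m → σ i = i :=
    fun σ => by simp only [not_lt]
  rw [permsBelow, ← Fintype.card_subtype, Fintype.card_congr (Equiv.subtypeEquivRight hfix),
    ← Fintype.card_congr (Perm.subtypeEquivSubtypePerm fun i : Fin n => (i : ℕ) < m),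
    Fintype.card_perm, Fintype.card_fin_lt_of_le hmn]

lemma val_apply_lt_of_mem_permsBelow (hπ : π ∈ permsBelow n m) {i : Fin n} (hi : (i : ℕ) < m) :
    (π i : ℕ) < m := by
  by_contra! h
  have := π.injective (mem_permsBelow.1 hπ _ h)
  omega

lemma inv_mem_permsBelow (hπ : π ∈ permsBelow n m) : π⁻¹ ∈ permsBelow n m :=
  mem_permsBelow.2 fun i hi => π.injective (by simp [mem_permsBelow.1 hπ i hi])

lemma mul_swap_mem_permsBelow (hπ : π ∈ permsBelow n m) {a b : Fin n} (ha : (a : ℕ) < m)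
    (hb : (b : ℕ) < m) : π * swap a b ∈ permsBelow n m := by
  refine mem_permsBelow.2 fun i hi => ?_
  rw [Perm.mul_apply, swap_apply_of_ne_of_ne (by omega) (by omega), mem_permsBelow.1 hπ i hi]

end permsBelow

section chi

variable {n d : ℕ}

open Classical in
def lowerSeqs (B : Fin d → Fin n) : Finset (Fin d → Fin n) :=
  univ.filter fun A => Function.Injective A ∧ (∀ i j, A i ≠ B j) ∧ ∀ i, A i < B i

lemma chiB_eq_sum_lowerSeqs (B : Fin d → Fin n) : chiB B = ∑ A ∈ lowerSeqs B, chiAB A B := rfl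

@[simp]
lemma mem_lowerSeqs {A B : Fin d → Fin n} :
    A ∈ lowerSeqs B ↔ Function.Injective A ∧ (∀ i j, A i ≠ B j) ∧ ∀ i, A i < B i := by
  simp [lowerSeqs]

lemma rename_chiAB (π : Perm (Fin n)) (A B : Fin d → Fin n) :
    rename π (chiAB A B) = chiAB (π ∘ A) (π ∘ B) := by
  simp [chiAB, map_prod]

lemma rename_swap_chiAB {A B : Fin d → Fin n} (hA : Function.Injective A)
    (hB : Function.Injective B) (hAB : ∀ i j, A i ≠ B j) (k : Fin d) :
    rename (swap (A k) (B k)) (chiAB A B) = -chiAB A B := by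
  have hfix : ∀ i ≠ k, swap (A k) (B k) (A i) = A i ∧ swap (A k) (B k) (B i) = B i :=
    fun i hi => ⟨swap_apply_of_ne_of_ne (hA.ne hi) (hAB i k),
      swap_apply_of_ne_of_ne (hAB k i).symm (hB.ne hi)⟩
  rw [rename_chiAB, chiAB, chiAB, Fintype.prod_eq_mul_prod_compl k,
    Fintype.prod_eq_mul_prod_compl k (fun i => X (A i) - X (B i))]
  rw [prod_congr rfl fun i hi => by
    obtain ⟨hAi, hBi⟩ := hfix i (by simpa using hi)
    rw [Function.comp_apply, Function.comp_apply, hAi, hBi]]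
  simp only [Function.comp_apply, swap_apply_left, swap_apply_right]
  ring

lemma comp_mem_lowerSeqs {m : ℕ} {π : Perm (Fin n)} (hπ : π ∈ permsBelow n m)
    {A B : Fin d → Fin n} (hB : ∀ i, m ≤ (B i : ℕ)) (hA : A ∈ lowerSeqs B) :
    π ∘ A ∈ lowerSeqs B := by
  obtain ⟨hinj, hdisj, hlt⟩ := mem_lowerSeqs.1 hA
  have hπB : ∀ j, π (B j) = B j := fun j => mem_permsBelow.1 hπ _ (hB j)
  refine mem_lowerSeqs.2 ⟨π.injective.comp hinj, fun i j h => hdisj i j ?_, fun i => ?_⟩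
  · exact π.injective (h.trans (hπB j).symm)
  · rcases lt_or_ge (A i : ℕ) m with hAi | hAi
    · exact Fin.lt_def.2 ((val_apply_lt_of_mem_permsBelow hπ hAi).trans_le (hB i))
    · rw [Function.comp_apply, mem_permsBelow.1 hπ _ hAi]
      exact hlt i

lemma rename_chiB_of_mem_permsBelow {m : ℕ} {π : Perm (Fin n)} (hπ : π ∈ permsBelow n m)
    {B : Fin d → Fin n} (hB : ∀ i, m ≤ (B i : ℕ)) : rename π (chiB B) = chiB B := by
  have hπB : π ∘ B = B := funext fun j => mem_permsBelow.1 hπ _ (hB j)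
  rw [chiB_eq_sum_lowerSeqs, map_sum]
  refine sum_nbij' (⇑π ∘ ·) (⇑π⁻¹ ∘ ·) (fun A => comp_mem_lowerSeqs hπ hB)
    (fun A => comp_mem_lowerSeqs (inv_mem_permsBelow hπ) hB)
    (fun A _ => by simp [← Function.comp_assoc]) (fun A _ => by simp [← Function.comp_assoc])
    (fun A _ => by rw [rename_chiAB, hπB])

end chi

lemma sum_rename_eq_zero_of_rename_swap {σ R : Type*} [CommRing R] [DecidableEq σ]
    {S : Finset (Perm σ)} {a b : σ} (hab : a ≠ b) (hS : ∀ π ∈ S, π * swap a b ∈ S)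
    {p : MvPolynomial σ R} (hp : rename (swap a b) p = -p) :
    ∑ π ∈ S, rename π p = 0 := by
  refine sum_involution (fun π _ => π * swap a b) (fun π _ => ?_) (fun π _ _ h => ?_)
    (fun π hπ => hS π hπ) (fun π _ => by simp [mul_assoc])
  · rw [Perm.coe_mul, ← rename_rename, hp, map_neg, add_neg_cancel]
  · exact hab (mul_swap_eq_iff.1 h)

section averaging

variable {n d m : ℕ}

lemma sum_rename_chiB_of_exists_lt {B : Fin d → Fin n} (hB : Function.Injective B)
    (hBm : ∃ i, (B i : ℕ) < m) : ∑ π ∈ permsBelow n m, rename π (chiB B) = 0 := by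
  obtain ⟨k, hk⟩ := hBm
  rw [chiB_eq_sum_lowerSeqs]
  simp_rw [map_sum]
  rw [sum_comm]
  refine sum_eq_zero fun A hA => ?_
  obtain ⟨hA, hAB, hlt⟩ := mem_lowerSeqs.1 hA
  exact sum_rename_eq_zero_of_rename_swap (hAB k k)
    (fun π hπ => mul_swap_mem_permsBelow hπ ((Fin.lt_def.1 (hlt k)).trans hk) hk)
    (rename_swap_chiAB hA hB hAB k)

lemma sum_rename_chiB (hmn : m ≤ n) {B : Fin d → Fin n} (hB : Function.Injective B) :
    ∑ π ∈ permsBelow n m, rename π (chiB B) =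
      if ∀ i, m ≤ (B i : ℕ) then m.factorial • chiB B else 0 := by
  split_ifs with hBm
  · rw [sum_congr rfl fun π hπ => rename_chiB_of_mem_permsBelow hπ hBm, sum_const,
      card_permsBelow hmn]
  · push Not at hBm
    exact sum_rename_chiB_of_exists_lt hB hBm

end averaging

section independence

variable {n d : ℕ}

lemma isHomogeneous_chiB (B : Fin d → Fin n) : (chiB B).IsHomogeneous d := by
  refine IsHomogeneous.sum _ _ _ fun A _ => ?_
  simpa [chiAB] using IsHomogeneous.prod univ _ (fun _ => 1) fun i _ =>
    (isHomogeneous_X ℝ (A i)).sub (isHomogeneous_X ℝ (B i))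

lemma eq_zero_of_sum_isHomogeneous_eq_zero {σ R : Type*} [CommSemiring R]
    {s : Finset ℕ} {p : ℕ → MvPolynomial σ R} (hp : ∀ k ∈ s, (p k).IsHomogeneous k)
    (h : ∑ k ∈ s, p k = 0) {k : ℕ} (hk : k ∈ s) : p k = 0 := by
  have := congrArg (homogeneousComponent k) h
  rwa [map_sum, map_zero, sum_congr rfl fun j hj => homogeneousComponent_of_mem (hp j hj),
    sum_ite_eq, if_pos hk] at this

def indicatorCompl (T : Finset (Fin n)) : Fin n → ℝ := fun j => if j ∈ T then 0 else 1

lemma image_eq_of_eval_chiAB_ne_zero {A B : Fin d → Fin n} (hA : Function.Injective A)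
    (hB : Function.Injective B) (hAB : ∀ i j, A i ≠ B j) (hle : ∀ i, A i ≤ B i)
    {T : Finset (Fin n)} (hT : #T ≤ d) (hw : ∑ i, (B i : ℕ) ≤ ∑ t ∈ T, (t : ℕ))
    (h : eval (indicatorCompl T) (chiAB A B) ≠ 0) : univ.image B = T := by
  have hmem : ∀ i, A i ∉ T → B i ∈ T := fun i hAi => by
    by_contra hBi
    rw [chiAB, map_prod] at h
    exact h (prod_eq_zero (mem_univ i) (by simp [indicatorCompl, hAi, hBi]))
  -- `c i` is the endpoint of the `i`-th factor lying in `T`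
  set c : Fin d → Fin n := fun i => if A i ∈ T then A i else B i with hc
  have hcT : ∀ i, c i ∈ T := fun i => by
    by_cases hAi : A i ∈ T <;> simp [hc, hAi, hmem]
  have hcB : ∀ i, (c i : ℕ) ≤ B i := fun i => by
    by_cases hAi : A i ∈ T <;> simp [hc, hAi, Fin.le_def.1 (hle i)]
  have hc_inj : Function.Injective c := fun i j hij => by
    by_cases hAi : A i ∈ T <;> by_cases hAj : A j ∈ T <;>
      simp only [hc, hAi, hAj, if_true, if_false] at hij
    exacts [hA hij, (hAB i j hij).elim, (hAB j i hij.symm).elim, hB hij]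
  have himage : univ.image c = T :=
    eq_of_subset_of_card_le (image_subset_iff.2 fun i _ => hcT i)
      (by rwa [card_image_of_injective _ hc_inj, card_univ, Fintype.card_fin])
  have hsum : ∑ i, (c i : ℕ) = ∑ i, (B i : ℕ) :=
    le_antisymm (sum_le_sum fun i _ => hcB i)
      (hw.trans (by rw [← himage, sum_image fun i _ j _ h => hc_inj h]))
  have hcB_eq : c = B :=
    funext fun i => Fin.ext ((sum_eq_sum_iff_of_le fun i _ => hcB i).1 hsum i (mem_univ i))
  rw [← hcB_eq, himage]

lemma eval_indicatorCompl_chiB_self (B : Fin d → Fin n) :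
    eval (indicatorCompl (univ.image B)) (chiB B) = #(lowerSeqs B) := by
  rw [chiB_eq_sum_lowerSeqs, map_sum, Finset.card_eq_sum_ones, Nat.cast_sum]
  refine sum_congr rfl fun A hA => ?_
  have hAB := (mem_lowerSeqs.1 hA).2.1
  rw [chiAB, map_prod, Nat.cast_one]
  refine Finset.prod_eq_one fun i _ => ?_
  simp [indicatorCompl, fun j => (hAB i j).symm]

lemma eval_indicatorCompl_chiB_eq_zero {B B₀ : Fin d → Fin n} (hB : StrictMono B)
    (hB₀ : StrictMono B₀) (hne : B ≠ B₀) (hw : ∑ i, (B i : ℕ) ≤ ∑ i, (B₀ i : ℕ)) :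
    eval (indicatorCompl (univ.image B₀)) (chiB B) = 0 := by
  rw [chiB_eq_sum_lowerSeqs, map_sum]
  refine sum_eq_zero fun A hA => ?_
  obtain ⟨hA, hAB, hlt⟩ := mem_lowerSeqs.1 hA
  by_contra h
  have himage := image_eq_of_eval_chiAB_ne_zero hA hB.injective hAB (fun i => (hlt i).le)
    (by rw [card_image_of_injective _ hB₀.injective, card_univ, Fintype.card_fin])
    (by rwa [sum_image fun i _ j _ h => hB₀.injective h]) h
  apply hne
  have hrange := congrArg ((↑) : Finset (Fin n) → Set (Fin n)) himage
  simp only [coe_image, coe_univ, Set.image_univ] at hrange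
  exact (hB.range_inj hB₀).1 hrange

lemma lowerSeqs_nonempty {B : Fin d → Fin n} (hB : IsTopSet B) : (lowerSeqs B).Nonempty :=
  let ⟨A, hA⟩ := hB.2
  ⟨A, mem_lowerSeqs.2 hA⟩

/-- Evaluate at the point vanishing exactly on the top set of largest weight `∑ i, B i` with a
nonzero coefficient: every other `χ_B` vanishes there. -/
theorem linearIndepOn_chiB : LinearIndepOn ℝ chiB {B : Fin d → Fin n | IsTopSet B} := by
  classical
  refine linearIndepOn_iff'.2 fun t g hts h0 => ?_
  by_contra! hne
  obtain ⟨B₀, hB₀, hmax⟩ := exists_max_image (t.filter (g · ≠ 0)) (fun B => ∑ i, (B i : ℕ))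
    (by simpa [Finset.Nonempty] using hne)
  rw [mem_filter] at hB₀
  have htop : IsTopSet B₀ := hts hB₀.1
  have heval := congrArg (eval (indicatorCompl (univ.image B₀))) h0
  rw [map_sum, map_zero, sum_eq_single B₀ (fun B hB hBB₀ => ?_) (absurd hB₀.1), smul_eval,
    eval_indicatorCompl_chiB_self] at heval
  · exact mul_ne_zero hB₀.2 (Nat.cast_ne_zero.2 (lowerSeqs_nonempty htop).card_ne_zero) heval
  · by_cases hg : g B = 0
    · simp [hg]
    rw [smul_eval, eval_indicatorCompl_chiB_eq_zero (hts hB).1 htop.1 hBB₀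
      (hmax B (mem_filter.2 ⟨hB, hg⟩)), mul_zero]

end independence

section expansion

variable {n m : ℕ}

open Classical in
lemma sum_filter_isTopSet_split {M : Type*} [AddCommMonoid M] {d : ℕ} (m : ℕ)
    (g : (Fin d → Fin n) → M) :
    ∑ B ∈ univ.filter (fun B : Fin d → Fin n => IsTopSet B), g B =
      ∑ B ∈ univ.filter (fun B : Fin d → Fin n => IsTopSet B ∧ ∀ i, m ≤ (B i : ℕ)), g B +
        ∑ B ∈ univ.filter (fun B : Fin d → Fin n => IsTopSet B ∧ ∃ i, (B i : ℕ) < m), g B := by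
  rw [← sum_filter_add_sum_filter_not _ fun B : Fin d → Fin n => ∀ i, m ≤ (B i : ℕ),
    filter_filter, filter_filter]
  simp only [not_forall, not_le]

open Classical in
lemma sum_rename_sum_smul_chiB (hmn : m ≤ n) (s : Finset ℕ)
    (c : ∀ d : ℕ, (Fin d → Fin n) → ℝ) :
    ∑ π ∈ permsBelow n m, rename π
        (∑ d ∈ s, ∑ B ∈ univ.filter (fun B : Fin d → Fin n => IsTopSet B), c d B • chiB B) =
      m.factorial • ∑ d ∈ s,
        ∑ B ∈ univ.filter (fun B : Fin d → Fin n => IsTopSet B ∧ ∀ i, m ≤ (B i : ℕ)),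
          c d B • chiB B := by
  simp only [map_sum, map_smul]
  rw [sum_comm, smul_sum]
  refine sum_congr rfl fun d _ => ?_
  rw [sum_comm, ← filter_filter, sum_filter (fun B : Fin d → Fin n => ∀ i, m ≤ (B i : ℕ)),
    smul_sum]
  refine sum_congr rfl fun B hB => ?_
  rw [← smul_sum, sum_rename_chiB hmn (mem_filter.1 hB).2.1.injective]
  split_ifs <;> simp [smul_comm]

end expansion

open Classical in
/-- Indices are 0-based: `[m]` is the set of indices `< m`. -/
theorem average_over_symmetric_group {n : ℕ} (f : MvPolynomial (Fin n) ℝ)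
    (fc : ∀ d : ℕ, (Fin d → Fin n) → ℝ)
    (hexp : f = ∑ d ∈ Finset.range (n + 1),
      ∑ B ∈ Finset.univ.filter (fun B : Fin d → Fin n => IsTopSet B), fc d B • chiB B)
    (m : ℕ) (hmn : m ≤ n) :
    (((m.factorial : ℝ))⁻¹ • ∑ π ∈ Finset.univ.filter
        (fun π : Equiv.Perm (Fin n) => ∀ i : Fin n, m ≤ (i : ℕ) → π i = i),
        MvPolynomial.rename (⇑π) f)
      = ∑ d ∈ Finset.range (n + 1),
          ∑ B ∈ Finset.univ.filter
            (fun B : Fin d → Fin n => IsTopSet B ∧ ∀ i, m ≤ (B i : ℕ)),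
            fc d B • chiB B
    ∧ ((∀ π : Equiv.Perm (Fin n), (∀ i : Fin n, m ≤ (i : ℕ) → π i = i) →
          MvPolynomial.rename (⇑π) f = f)
        ↔ ∀ (d : ℕ) (B : Fin d → Fin n), IsTopSet B → (∃ i, (B i : ℕ) < m) →
            fc d B = 0) := by
  rw [← permsBelow]
  have hfac : (m.factorial : ℝ) ≠ 0 := Nat.cast_ne_zero.2 m.factorial_ne_zero
  have hmean := congrArg ((m.factorial : ℝ)⁻¹ • ·) (hexp ▸ sum_rename_sum_smul_chiB hmn _ fc)
  simp only [← Nat.cast_smul_eq_nsmul ℝ, inv_smul_smul₀ hfac] at hmean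
  refine ⟨hmean, fun hinv d B hB hBm => ?_, fun hc π hπ => ?_⟩
  · have hfP := hmean
    rw [sum_congr rfl fun π hπ => hinv π (mem_permsBelow.1 hπ), sum_const,
      card_permsBelow hmn, ← Nat.cast_smul_eq_nsmul ℝ, inv_smul_smul₀ hfac] at hfP
    simp_rw [sum_filter_isTopSet_split m] at hexp
    rw [sum_add_distrib, ← hfP, left_eq_add] at hexp
    have hd : d ∈ range (n + 1) := mem_range_succ_iff.2 <| by
      simpa using Fintype.card_le_of_injective B hB.1.injective
    have hQd := eq_zero_of_sum_isHomogeneous_eq_zero (fun e _ => IsHomogeneous.sum _ _ _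
      fun B _ => smul_eq_C_mul (chiB B) (fc e B) ▸ (isHomogeneous_chiB B).C_mul _) hexp hd
    exact linearIndepOn_iff'.1 linearIndepOn_chiB _ _ (fun B hB => (mem_filter.1 hB).2.1) hQd B
      (mem_filter.2 ⟨mem_univ B, hB, hBm⟩)
  · rw [hexp]
    simp only [map_sum, map_smul]
    refine sum_congr rfl fun d _ => sum_congr rfl fun B hB => ?_
    by_cases hBm : ∀ i, m ≤ (B i : ℕ)
    · rw [rename_chiB_of_mem_permsBelow (mem_permsBelow.2 hπ) hBm]
    · push Not at hBm
      rw [hc d B (mem_filter.1 hB).2 hBm, zero_smul, zero_smul]
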